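/- arXiv:2506.23065 — 2 statements merged into one kernel-verified Lean document; each statement's English description precedes it below -/
import Mathlib

section
/- Fix t1, t2 > 0. Then the limit as N → ∞ of (t1·t2/N) · ∫_0^{N/t1} dx1 ∫_0^{N/t2} dx2 ∫_0^2 dτ · p_{2N^τ/(t1∧t2) - 1/t1 - 1/t2}(x2 - x1) equals 2·min(t1, t2). -/
open MeasureTheory Real Filter

/-- The heat kernel `p_t(x) = (2πt)^{-1/2} exp(-x²/(2t))`. -/
noncomputable def heatKernel (t x : ℝ) : ℝ :=
  Real.exp (-x ^ 2 / (2 * t)) / Real.sqrt (2 * Real.pi * t)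

lemma heatKernel_nonneg (t x : ℝ) : 0 ≤ heatKernel t x :=
  div_nonneg (Real.exp_nonneg _) (Real.sqrt_nonneg _)

lemma measurable_heatKernel : Measurable (fun p : ℝ × ℝ => heatKernel p.1 p.2) := by
  unfold heatKernel
  fun_prop

lemma integrable_heatKernel {t : ℝ} (ht : 0 < t) (y : ℝ) :
    Integrable (fun x => heatKernel t (x - y)) := by
  unfold heatKernel
  have h : Integrable (fun x : ℝ => Real.exp (-(1/(2*t)) * x ^ 2)) :=
    integrable_exp_neg_mul_sq (by positivity)
  have := ((h.comp_sub_right y).div_const (Real.sqrt (2 * Real.pi * t)))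
  refine this.congr (Eventually.of_forall fun x => ?_)
  ring_nf

lemma integral_heatKernel {t : ℝ} (ht : 0 < t) (y : ℝ) :
    ∫ x, heatKernel t (x - y) = 1 := by
  unfold heatKernel
  rw [integral_sub_right_eq_self (fun x => Real.exp (-x ^ 2 / (2 * t)) / Real.sqrt (2 * Real.pi * t)) y]
  have : ∀ x : ℝ, Real.exp (-x ^ 2 / (2 * t)) = Real.exp (-(1/(2*t)) * x ^ 2) := by
    intro x; ring_nf
  simp_rw [this, integral_div, integral_gaussian]
  rw [div_eq_one_iff_eq (by positivity)]
  rw [show Real.pi / (1/(2*t)) = 2 * Real.pi * t by field_simp]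

lemma setIntegral_heatKernel_le_one {t : ℝ} (ht : 0 < t) (y : ℝ) (s : Set ℝ) :
    ∫ x in s, heatKernel t (x - y) ≤ 1 := by
  rw [← integral_heatKernel ht y]
  exact setIntegral_le_integral (integrable_heatKernel ht y)
    (Eventually.of_forall fun x => heatKernel_nonneg _ _)

lemma setIntegral_heatKernel_nonneg {t : ℝ} (y : ℝ) (s : Set ℝ) :
    0 ≤ ∫ x in s, heatKernel t (x - y) :=
  integral_nonneg fun x => heatKernel_nonneg _ _

lemma heatKernel_tail {t c y : ℝ} (ht : 0 < t) (hc : 0 < c) (s : Set ℝ)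
    (hms : MeasurableSet s) (hd : ∀ x ∈ s, c ≤ |x - y|) :
    ∫ x in s, heatKernel t (x - y) ≤ 6 * t / c ^ 2 := by
  set G : ℝ → ℝ := fun x => Real.exp (-c^2/(4*t)) * (Real.exp (-(x-y)^2/(4*t)) / Real.sqrt (2 * Real.pi * t)) with hGdef
  have hG : Integrable G := by
    have h : Integrable (fun x : ℝ => Real.exp (-(1/(4*t)) * x ^ 2)) :=
      integrable_exp_neg_mul_sq (by positivity)
    have := (((h.comp_sub_right y).div_const (Real.sqrt (2 * Real.pi * t))).const_mul (Real.exp (-c^2/(4*t))))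
    refine this.congr (Eventually.of_forall fun x => ?_)
    simp only [hGdef]
    ring_nf
  have hpt : ∀ x : ℝ, c ^ 2 ≤ (x - y) ^ 2 → heatKernel t (x - y) ≤ G x := by
    intro x hcx
    show heatKernel t (x-y) ≤ Real.exp (-c^2/(4*t)) * (Real.exp (-(x-y)^2/(4*t)) / Real.sqrt (2 * Real.pi * t))
    unfold heatKernel
    rw [← mul_div_assoc, div_le_div_iff_of_pos_right (by positivity), ← Real.exp_add, Real.exp_le_exp]
    have hexpo : -(x-y)^2/(2*t) ≤ (-c^2 + -(x-y)^2)/(4*t) := by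
      rw [div_le_div_iff₀ (by positivity) (by positivity)]
      nlinarith
    calc -(x-y)^2/(2*t) ≤ (-c^2 + -(x-y)^2)/(4*t) := hexpo
      _ = -c^2/(4*t) + -(x-y)^2/(4*t) := add_div _ _ _
  have step1 : ∫ x in s, heatKernel t (x - y) ≤ ∫ x in s, G x := by
    apply setIntegral_mono_on ((integrable_heatKernel ht y).integrableOn) hG.integrableOn hms
    intro x hx
    apply hpt
    have h1 := hd x hx
    calc c ^ 2 ≤ |x - y| ^ 2 := by nlinarith [abs_nonneg (x - y)]
      _ = (x - y) ^ 2 := sq_abs _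
  have step2 : ∫ x in s, G x ≤ ∫ x, G x :=
    setIntegral_le_integral hG (Eventually.of_forall fun x => by positivity)
  have step3 : ∫ x, G x = Real.exp (-c^2/(4*t)) * Real.sqrt 2 := by
    rw [hGdef, MeasureTheory.integral_const_mul]
    congr 1
    rw [integral_sub_right_eq_self (fun x => Real.exp (-x ^ 2 / (4 * t)) / Real.sqrt (2 * Real.pi * t)) y]
    have : ∀ x : ℝ, Real.exp (-x ^ 2 / (4 * t)) = Real.exp (-(1/(4*t)) * x ^ 2) := by
      intro x; ring_nf
    simp_rw [this, integral_div, integral_gaussian]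
    rw [div_eq_iff (by positivity), show Real.pi / (1/(4*t)) = 2 * (2 * Real.pi * t) by field_simp; ring,
      Real.sqrt_mul (by norm_num), mul_comm]
  have step4 : Real.exp (-c^2/(4*t)) * Real.sqrt 2 ≤ 6 * t / c ^ 2 := by
    have hu : (0:ℝ) < c^2/(4*t) := by positivity
    have hexp : Real.exp (-c^2/(4*t)) ≤ 4*t/c^2 := by
      rw [neg_div, Real.exp_neg, show 4*t/c^2 = (c^2/(4*t))⁻¹ by rw [inv_div]]
      exact inv_anti₀ hu (by nlinarith [Real.add_one_le_exp (c^2/(4*t))])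
    have hsqrt2 : Real.sqrt 2 ≤ 1.5 := by
      rw [show (1.5:ℝ) = Real.sqrt (1.5^2) by rw [Real.sqrt_sq]; norm_num]
      apply Real.sqrt_le_sqrt; norm_num
    calc Real.exp (-c^2/(4*t)) * Real.sqrt 2 ≤ (4*t/c^2) * 1.5 := by
          apply mul_le_mul hexp hsqrt2 (Real.sqrt_nonneg _) (by positivity)
      _ = 6 * t / c^2 := by ring
  linarith

lemma heatKernel_le {t : ℝ} (ht : 0 < t) (x : ℝ) :
    heatKernel t x ≤ 1 / Real.sqrt (2 * Real.pi * t) := by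
  unfold heatKernel
  have hs : 0 < Real.sqrt (2 * Real.pi * t) := by positivity
  rw [div_le_div_iff_of_pos_right hs, Real.exp_le_one_iff, neg_div, neg_nonpos]
  positivity

-- comp_snd integrability
lemma integrable_comp_snd {α β : Type*} [MeasurableSpace α] [MeasurableSpace β]
    {μ : Measure α} {ν : Measure β} [IsFiniteMeasure μ] [SFinite ν]
    {g : β → ℝ} (hg : Integrable g ν) :
    Integrable (fun p : α × β => g p.2) (μ.prod ν) := by
  have h1 : Integrable g (Measure.map Prod.snd (μ.prod ν)) := by
    rw [Measure.map_snd_prod]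
    exact hg.smul_measure (measure_ne_top μ _)
  have := (integrable_map_measure h1.aestronglyMeasurable measurable_snd.aemeasurable).mp h1
  exact this

section var
variable {t1 t2 : ℝ} (ht1 : 0 < t1) (ht2 : 0 < t2)

lemma vN_lb (ht1 : 0 < t1) (ht2 : 0 < t2) {N τ : ℝ} (hN : 3 ≤ N) (hτ : 0 < τ) :
    2 * τ / min t1 t2 ≤ 2 * N ^ τ / min t1 t2 - 1 / t1 - 1 / t2 := by
  have hm : 0 < min t1 t2 := lt_min ht1 ht2
  have hN1 : (1:ℝ) < N := by linarith
  have hlog : 1 ≤ Real.log N := by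
    rw [Real.le_log_iff_exp_le (by linarith)]
    calc Real.exp 1 ≤ 2.7182818286 := le_of_lt Real.exp_one_lt_d9
      _ ≤ N := by linarith
  have hexp : τ + 1 ≤ N ^ τ := by
    rw [Real.rpow_def_of_pos (by linarith)]
    calc τ + 1 ≤ Real.log N * τ + 1 := by nlinarith
      _ ≤ Real.exp (Real.log N * τ) := Real.add_one_le_exp _
  have hsum : 1 / t1 + 1 / t2 ≤ 2 / min t1 t2 := by
    have h1 : 1 / t1 ≤ 1 / min t1 t2 := by
      apply one_div_le_one_div_of_le hm (min_le_left _ _)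
    have h2 : 1 / t2 ≤ 1 / min t1 t2 := by
      apply one_div_le_one_div_of_le hm (min_le_right _ _)
    calc 1/t1 + 1/t2 ≤ 1/min t1 t2 + 1/min t1 t2 := add_le_add h1 h2
      _ = 2 / min t1 t2 := by ring
  have key : 2 * (τ + 1) / min t1 t2 ≤ 2 * N ^ τ / min t1 t2 := by
    gcongr
  have : 2 * (τ+1) / min t1 t2 = 2 * τ / min t1 t2 + 2 / min t1 t2 := by ring
  linarith

lemma vN_pos (ht1 : 0 < t1) (ht2 : 0 < t2) {N τ : ℝ} (hN : 3 ≤ N) (hτ : 0 < τ) :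
    0 < 2 * N ^ τ / min t1 t2 - 1 / t1 - 1 / t2 := by
  have hm : 0 < min t1 t2 := lt_min ht1 ht2
  have := vN_lb ht1 ht2 hN hτ
  have : 0 < 2 * τ / min t1 t2 := by positivity
  linarith [vN_lb ht1 ht2 hN hτ]

lemma vN_ub (ht1 : 0 < t1) (ht2 : 0 < t2) {N τ : ℝ} (hN : 3 ≤ N) (hτ : 0 < τ) (hτ2 : τ ≤ 2) :
    2 * N ^ τ / min t1 t2 - 1 / t1 - 1 / t2 ≤ 2 * N ^ (2:ℝ) / min t1 t2 := by
  have hm : 0 < min t1 t2 := lt_min ht1 ht2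
  have h1 : N ^ τ ≤ N ^ (2:ℝ) := Real.rpow_le_rpow_of_exponent_le (by linarith) hτ2
  have h2 : 2 * N ^ τ / min t1 t2 ≤ 2 * N ^ (2:ℝ) / min t1 t2 := by gcongr
  have h3 : 0 < 1/t1 := by positivity
  have h4 : 0 < 1/t2 := by positivity
  linarith

end var

lemma Measurable.heatKernel_comp {α : Type*} [MeasurableSpace α] {f g : α → ℝ}
    (hf : Measurable f) (hg : Measurable g) : Measurable fun a => heatKernel (f a) (g a) := by
  unfold heatKernel
  fun_prop

lemma heatKernel_le_of_le {t s x : ℝ} (hs : 0 < s) (hst : s ≤ t) :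
    heatKernel t x ≤ Real.sqrt (1 / (2 * Real.pi * s)) := by
  have ht : 0 < t := lt_of_lt_of_le hs hst
  calc heatKernel t x ≤ 1 / Real.sqrt (2 * Real.pi * t) := heatKernel_le ht x
    _ ≤ 1 / Real.sqrt (2 * Real.pi * s) := by
        apply one_div_le_one_div_of_le (by positivity)
        apply Real.sqrt_le_sqrt; nlinarith [Real.pi_pos]
    _ = Real.sqrt (1 / (2 * Real.pi * s)) := by
        rw [one_div, ← Real.sqrt_inv, one_div]

lemma integrableOn_bound (C : ℝ) :
    IntegrableOn (fun τ : ℝ => Real.sqrt (C / τ)) (Set.Ioc 0 2) := by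
  have h : IntervalIntegrable (fun x : ℝ => x ^ (-(1/2) : ℝ)) volume 0 2 :=
    intervalIntegral.intervalIntegrable_rpow' (by norm_num)
  have h2 : IntegrableOn (fun x : ℝ => x ^ (-(1/2) : ℝ)) (Set.Ioc 0 2) :=
    (intervalIntegrable_iff_integrableOn_Ioc_of_le (by norm_num)).mp h
  have h3 : IntegrableOn (fun x : ℝ => Real.sqrt C * x ^ (-(1/2) : ℝ)) (Set.Ioc 0 2) :=
    h2.const_mul (Real.sqrt C)
  apply IntegrableOn.congr_fun h3 ?_ measurableSet_Ioc
  intro τ hτ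
  have hτ0 : 0 < τ := hτ.1
  show Real.sqrt C * τ ^ (-(1/2):ℝ) = Real.sqrt (C / τ)
  rw [show C / τ = C * τ⁻¹ by ring, Real.sqrt_mul' _ (by positivity), Real.sqrt_inv]
  rw [Real.rpow_neg hτ0.le, ← Real.sqrt_eq_rpow]

lemma measurable_inner (t b : ℝ) :
    Measurable (fun y : ℝ => ∫ x in Set.Ioc 0 b, heatKernel t (x - y)) := by
  have hsm : Measurable (fun p : ℝ × ℝ => heatKernel t (p.2 - p.1)) :=
    Measurable.heatKernel_comp measurable_const (measurable_snd.sub measurable_fst)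
  exact hsm.stronglyMeasurable.integral_prod_right'.measurable

lemma measurable_vN (t1 t2 : ℝ) {N : ℝ} (hN : 0 < N) :
    Measurable (fun τ : ℝ => 2 * N ^ τ / min t1 t2 - 1 / t1 - 1 / t2) := by
  have h : Measurable (fun τ : ℝ => N ^ τ) := by
    simp_rw [Real.rpow_def_of_pos hN]
    exact (measurable_const.mul measurable_id).exp
  fun_prop

lemma sm_J_inner (t1 t2 : ℝ) {N : ℝ} (hN : 0 < N) :
    StronglyMeasurable (fun p : ℝ × ℝ =>
      ∫ x2 in Set.Ioc 0 (N/t2), heatKernel (2 * N ^ p.1 / min t1 t2 - 1/t1 - 1/t2) (x2 - p.2)) := by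
  have hq : Measurable (fun q : (ℝ × ℝ) × ℝ =>
      heatKernel (2 * N ^ q.1.1 / min t1 t2 - 1/t1 - 1/t2) (q.2 - q.1.2)) :=
    Measurable.heatKernel_comp ((measurable_vN t1 t2 hN).comp (measurable_fst.comp measurable_fst))
      (measurable_snd.sub (measurable_snd.comp measurable_fst))
  exact hq.stronglyMeasurable.integral_prod_right'

lemma sm_J (t1 t2 : ℝ) {N : ℝ} (hN : 0 < N) :
    StronglyMeasurable (fun τ : ℝ => ∫ x1 in Set.Ioc 0 (N/t1),
      ∫ x2 in Set.Ioc 0 (N/t2), heatKernel (2 * N ^ τ / min t1 t2 - 1/t1 - 1/t2) (x2 - x1)) :=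
  (sm_J_inner t1 t2 hN).integral_prod_right'

lemma sm_J_inner' (t1 t2 : ℝ) {N : ℝ} (hN : 0 < N) :
    StronglyMeasurable (fun p : ℝ × ℝ =>
      ∫ x2 in Set.Ioc 0 (N/t2), heatKernel (2 * N ^ p.2 / min t1 t2 - 1/t1 - 1/t2) (x2 - p.1)) := by
  have hq : Measurable (fun q : (ℝ × ℝ) × ℝ =>
      heatKernel (2 * N ^ q.1.2 / min t1 t2 - 1/t1 - 1/t2) (q.2 - q.1.1)) :=
    Measurable.heatKernel_comp ((measurable_vN t1 t2 hN).comp (measurable_snd.comp measurable_fst))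
      (measurable_snd.sub (measurable_fst.comp measurable_fst))
  exact hq.stronglyMeasurable.integral_prod_right'

-- integrability of F on finite measure sets
lemma integrableOn_F {t : ℝ} (ht : 0 < t) (b : ℝ) {s : Set ℝ} (hs : MeasurableSet s)
    (hμ : volume s ≠ ⊤) :
    IntegrableOn (fun y : ℝ => ∫ x in Set.Ioc 0 b, heatKernel t (x - y)) s := by
  have : Fact (volume s < ⊤) := ⟨lt_top_iff_ne_top.2 hμ⟩
  apply Integrable.mono' (integrable_const 1)
    ((measurable_inner t b).aestronglyMeasurable)
  refine Eventually.of_forall fun y => ?_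
  rw [Real.norm_eq_abs, abs_of_nonneg (setIntegral_heatKernel_nonneg y _)]
  exact setIntegral_heatKernel_le_one ht y _

lemma J_tendsto {t1 t2 : ℝ} (ht1 : 0 < t1) (ht2 : 0 < t2) {τ : ℝ} (hτ : τ ∈ Set.Ioo 0 2) :
    Tendsto (fun N : ℝ => (∫ x1 in Set.Ioc 0 (N/t1), ∫ x2 in Set.Ioc 0 (N/t2),
        heatKernel (2 * N ^ τ / min t1 t2 - 1/t1 - 1/t2) (x2 - x1)) / N)
      atTop (nhds (1 / max t1 t2)) := by
  obtain ⟨hτ0, hτ2⟩ := hτ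
  set m := min t1 t2 with hm_def
  set M := max t1 t2 with hM_def
  have hm : 0 < m := lt_min ht1 ht2
  have hM : 0 < M := lt_of_lt_of_le ht1 (le_max_left _ _)
  have ht1M : t1 ≤ M := le_max_left _ _
  have ht2M : t2 ≤ M := le_max_right _ _
  set θ : ℝ := (τ + 2) / 4 with hθ_def
  have hθ1 : θ < 1 := by rw [hθ_def]; linarith
  have hθτ : τ < 2 * θ := by rw [hθ_def]; linarith
  have hθ0 : 0 < θ := by rw [hθ_def]; linarith
  set D : ℝ → ℝ := fun N => N ^ (θ - 1) with hD_def
  set E : ℝ → ℝ := fun N => N ^ (τ - 2 * θ) with hE_def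
  have hD : Tendsto D atTop (nhds 0) := by
    rw [hD_def, show θ - 1 = -(1 - θ) by ring]
    exact tendsto_rpow_neg_atTop (by linarith)
  have hE : Tendsto E atTop (nhds 0) := by
    rw [hE_def, show τ - 2*θ = -(2*θ - τ) by ring]
    exact tendsto_rpow_neg_atTop (by linarith)
  set L : ℝ → ℝ := fun N => (1/M - 2 * D N) * (1 - (12/m) * E N) with hL_def
  set U : ℝ → ℝ := fun N => 1/M + D N + 12/(m*t1) * E N with hU_def
  have hLlim : Tendsto L atTop (nhds (1/M)) := by
    have h := Tendsto.mul ((tendsto_const_nhds (x := (1:ℝ)/M) (f := atTop)).sub (hD.const_mul 2))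
      ((tendsto_const_nhds (x := (1:ℝ)) (f := atTop)).sub (hE.const_mul (12/m)))
    rw [show ((1:ℝ)/M - 2*0) * (1 - 12/m*0) = 1/M by ring] at h
    exact h
  have hUlim : Tendsto U atTop (nhds (1/M)) := by
    have h := Tendsto.add ((tendsto_const_nhds (x := (1:ℝ)/M) (f := atTop)).add hD)
      (hE.const_mul (12/(m*t1)))
    rw [show ((1:ℝ)/M + 0) + 12/(m*t1)*0 = 1/M by ring] at h
    exact h
  -- eventual bounds
  have hDsmall : ∀ᶠ N in atTop, 2 * D N < 1/M := by
    have : Tendsto (fun N => 2 * D N) atTop (nhds (2 * 0)) := hD.const_mul 2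
    rw [mul_zero] at this
    exact this.eventually_lt_const (by positivity)
  have hbounds : ∀ᶠ N : ℝ in atTop,
      L N ≤ (∫ x1 in Set.Ioc 0 (N/t1), ∫ x2 in Set.Ioc 0 (N/t2),
        heatKernel (2 * N ^ τ / m - 1/t1 - 1/t2) (x2 - x1)) / N ∧
      (∫ x1 in Set.Ioc 0 (N/t1), ∫ x2 in Set.Ioc 0 (N/t2),
        heatKernel (2 * N ^ τ / m - 1/t1 - 1/t2) (x2 - x1)) / N ≤ U N := by
    filter_upwards [eventually_ge_atTop (3:ℝ), hDsmall] with N hN3 hND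
    have hN0 : (0:ℝ) < N := by linarith
    set v : ℝ := 2 * N ^ τ / m - 1/t1 - 1/t2 with hv_def
    have hv : 0 < v := vN_pos ht1 ht2 hN3 hτ0
    have hvle : v ≤ 2 * N ^ τ / m := by
      have h3 : 0 < 1/t1 := by positivity
      have h4 : 0 < 1/t2 := by positivity
      rw [hv_def]; linarith
    set c : ℝ := N ^ θ with hc_def
    have hc : 0 < c := Real.rpow_pos_of_pos hN0 θ
    have hcDN : c = D N * N := by
      have h1 : N ^ (θ - 1) * N ^ (1:ℝ) = N ^ θ := by
        rw [← Real.rpow_add hN0]; norm_num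
      rw [hc_def, hD_def, ← h1, Real.rpow_one]
    have hc2 : c ^ 2 = N ^ (2*θ) := by
      rw [hc_def, sq, ← Real.rpow_add hN0]; ring_nf
    have hvc2 : 6 * v / c ^ 2 ≤ 12/m * E N := by
      rw [hc2, hE_def]
      have h1 : 6 * v ≤ 12 * N ^ τ / m := by
        calc 6 * v ≤ 6 * (2 * N ^ τ / m) := by linarith
          _ = 12 * N ^ τ / m := by ring
      have h2 : (0:ℝ) < N ^ (2*θ) := Real.rpow_pos_of_pos hN0 _
      rw [div_le_iff₀ h2]
      have h3 : N ^ (τ - 2*θ) * N ^ (2*θ) = N ^ τ := by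
        rw [← Real.rpow_add hN0]; ring_nf
      calc 6 * v ≤ 12 * N ^ τ / m := h1
        _ = 12/m * (N ^ (τ - 2*θ) * N ^ (2*θ)) := by rw [h3]; ring
        _ = 12/m * N ^ (τ - 2*θ) * N ^ (2*θ) := by ring
    have hEpos : 0 ≤ 12/m * E N := by
      have : 0 ≤ E N := Real.rpow_nonneg hN0.le _
      positivity
    have h2c : 2 * c ≤ N / M := by
      have := hND.le
      calc 2 * c = (2 * D N) * N := by rw [hcDN]; ring
        _ ≤ (1/M) * N := by apply mul_le_mul_of_nonneg_right this hN0.le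
        _ = N / M := by ring
    set F : ℝ → ℝ := fun x1 => ∫ x2 in Set.Ioc 0 (N/t2), heatKernel v (x2 - x1) with hF_def
    have hFle : ∀ x1, F x1 ≤ 1 := fun x1 => setIntegral_heatKernel_le_one hv x1 _
    have hFnn : ∀ x1, 0 ≤ F x1 := fun x1 => setIntegral_heatKernel_nonneg x1 _
    have hFint : ∀ s : Set ℝ, MeasurableSet s → volume s ≠ ⊤ → IntegrableOn F s :=
      fun s hs hμ => integrableOn_F hv (N/t2) hs hμ
    have hNM_t1 : N / M ≤ N / t1 := by
      apply div_le_div_of_nonneg_left hN0.le ht1 ht1M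
    have hNM_t2 : N / M ≤ N / t2 := by
      apply div_le_div_of_nonneg_left hN0.le ht2 ht2M
    constructor
    · -- lower bound
      have hsub : Set.Ioc c (N/M - c) ⊆ Set.Ioc 0 (N/t1) := by
        apply Set.Ioc_subset_Ioc hc.le
        linarith
      have hptwise : ∀ x1 ∈ Set.Ioc c (N/M - c), 1 - 12/m * E N ≤ F x1 := by
        intro x1 hx1
        have htail : ∫ x2 in (Set.Ioc 0 (N/t2))ᶜ, heatKernel v (x2 - x1) ≤ 6 * v / c ^ 2 := by
          apply heatKernel_tail hv hc _ measurableSet_Ioc.compl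
          intro x hx
          simp only [Set.mem_compl_iff, Set.mem_Ioc, not_and, not_le, not_lt] at hx
          rcases le_or_gt x 0 with h | h
          · have : c ≤ x1 - x := by
              have := hx1.1; linarith
            rw [abs_sub_comm]
            calc c ≤ x1 - x := this
              _ ≤ |x1 - x| := le_abs_self _
          · have hxb : N/t2 < x := hx h
            have : c ≤ x - x1 := by
              have h1 := hx1.2
              have : x1 ≤ N/M - c := h1
              linarith
            calc c ≤ x - x1 := this
              _ ≤ |x - x1| := le_abs_self _
        have hsplit : F x1 + ∫ x2 in (Set.Ioc 0 (N/t2))ᶜ, heatKernel v (x2 - x1) = 1 := by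
          rw [hF_def]
          rw [integral_add_compl measurableSet_Ioc (integrable_heatKernel hv x1)]
          exact integral_heatKernel hv x1
        have : 1 - 6 * v / c ^ 2 ≤ F x1 := by linarith
        linarith
      have hconst : (N/M - 2*c) * (1 - 12/m * E N) ≤ ∫ x1 in Set.Ioc c (N/M - c), F x1 := by
        have hvol : (volume (Set.Ioc c (N/M - c))).toReal = N/M - 2*c := by
          rw [Real.volume_Ioc, ENNReal.toReal_ofReal (by linarith)]
          ring
        calc (N/M - 2*c) * (1 - 12/m * E N)
            = ∫ _ in Set.Ioc c (N/M - c), (1 - 12/m * E N) := by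
              rw [setIntegral_const, measureReal_def, hvol, smul_eq_mul]
          _ ≤ ∫ x1 in Set.Ioc c (N/M - c), F x1 := by
              apply setIntegral_mono_on (integrableOn_const ?_)
                (hFint _ measurableSet_Ioc ?_) measurableSet_Ioc hptwise
              · rw [Real.volume_Ioc]; exact ENNReal.ofReal_ne_top
              · rw [Real.volume_Ioc]; exact ENNReal.ofReal_ne_top
      have hmono : ∫ x1 in Set.Ioc c (N/M - c), F x1 ≤ ∫ x1 in Set.Ioc 0 (N/t1), F x1 := by
        apply setIntegral_mono_set (hFint _ measurableSet_Ioc ?_)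
          (Eventually.of_forall hFnn) (HasSubset.Subset.eventuallyLE hsub)
        rw [Real.volume_Ioc]; exact ENNReal.ofReal_ne_top
      have hJ : (N/M - 2*c) * (1 - 12/m * E N) ≤ ∫ x1 in Set.Ioc 0 (N/t1), F x1 :=
        le_trans hconst hmono
      have hLN : L N = (N/M - 2*c) * (1 - 12/m * E N) / N := by
        rw [hL_def, hcDN]
        field_simp
      rw [hLN, div_le_div_iff_of_pos_right hN0]
      exact hJ
    · -- upper bound
      set d : ℝ := min (N/t1) (N/M + c) with hd_def
      have hd0 : 0 ≤ d := le_min (by positivity) (by positivity)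
      have hda : d ≤ N/t1 := min_le_left _ _
      have hsplitJ : ∫ x1 in Set.Ioc 0 (N/t1), F x1
          = (∫ x1 in Set.Ioc 0 d, F x1) + ∫ x1 in Set.Ioc d (N/t1), F x1 := by
        rw [← setIntegral_union (Set.Ioc_disjoint_Ioc_of_le le_rfl) measurableSet_Ioc
          (hFint _ measurableSet_Ioc (by rw [Real.volume_Ioc]; exact ENNReal.ofReal_ne_top))
          (hFint _ measurableSet_Ioc (by rw [Real.volume_Ioc]; exact ENNReal.ofReal_ne_top))]
        rw [Set.Ioc_union_Ioc_eq_Ioc hd0 hda]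
      have hpart1 : ∫ x1 in Set.Ioc 0 d, F x1 ≤ N/M + c := by
        calc ∫ x1 in Set.Ioc 0 d, F x1 ≤ ∫ _ in Set.Ioc 0 d, (1:ℝ) := by
              apply setIntegral_mono_on (hFint _ measurableSet_Ioc (by rw [Real.volume_Ioc]; exact ENNReal.ofReal_ne_top))
                (integrableOn_const (by rw [Real.volume_Ioc]; exact ENNReal.ofReal_ne_top))
                measurableSet_Ioc (fun x _ => hFle x)
          _ = d := by rw [setIntegral_const, measureReal_def, Real.volume_Ioc, ENNReal.toReal_ofReal (by linarith), smul_eq_mul, mul_one, sub_zero]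
          _ ≤ N/M + c := min_le_right _ _
      have hpart2 : ∫ x1 in Set.Ioc d (N/t1), F x1 ≤ (N/t1) * (12/m * E N) := by
        rcases le_or_gt (N/t1) (N/M + c) with hcase | hcase
        · have hdeq : d = N/t1 := min_eq_left hcase
          rw [hdeq, Set.Ioc_self, Measure.restrict_empty, integral_zero_measure]
          positivity
        · have hdeq : d = N/M + c := min_eq_right hcase.le
          have hMt2 : M = t2 := by
            by_contra hne
            have hMt1 : M = t1 := by
              rcases max_choice t1 t2 with h | h
              · exact h
              · exact absurd h hne
            rw [hMt1] at hcase
            nlinarith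
          have hbd : N/M = N/t2 := by rw [hMt2]
          have hptw : ∀ x1 ∈ Set.Ioc d (N/t1), F x1 ≤ 6 * v / c ^ 2 := by
            intro x1 hx1
            rw [hF_def]
            apply heatKernel_tail hv hc _ measurableSet_Ioc
            intro x hx
            have hxb : x ≤ N/t2 := hx.2
            have hx1d : d < x1 := hx1.1
            have : c ≤ x1 - x := by
              rw [hdeq, hbd] at hx1d
              linarith
            rw [abs_sub_comm]
            calc c ≤ x1 - x := this
              _ ≤ |x1 - x| := le_abs_self _
          calc ∫ x1 in Set.Ioc d (N/t1), F x1 ≤ ∫ _ in Set.Ioc d (N/t1), (6 * v / c^2) := by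
                apply setIntegral_mono_on (hFint _ measurableSet_Ioc (by rw [Real.volume_Ioc]; exact ENNReal.ofReal_ne_top))
                  (integrableOn_const (by rw [Real.volume_Ioc]; exact ENNReal.ofReal_ne_top))
                  measurableSet_Ioc hptw
            _ = (volume (Set.Ioc d (N/t1))).toReal * (6 * v / c^2) := by rw [setIntegral_const, measureReal_def, smul_eq_mul]
            _ ≤ (N/t1) * (12/m * E N) := by
                apply mul_le_mul _ hvc2 (by positivity) (by positivity)
                rw [Real.volume_Ioc, ENNReal.toReal_ofReal (by linarith)]
                linarith
      have hUN : N * U N = N/M + c + (N/t1) * (12/m * E N) := by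
        rw [hU_def, hcDN]
        field_simp
      rw [div_le_iff₀ hN0, mul_comm (U N) N, hUN, hsplitJ]
      linarith
  exact tendsto_of_tendsto_of_tendsto_of_le_of_le' hLlim hUlim
    (hbounds.mono fun N h => h.1) (hbounds.mono fun N h => h.2)

section main
variable {t1 t2 : ℝ}

-- the pointwise bound with clean RHS
lemma hk_bound (ht1 : 0 < t1) (ht2 : 0 < t2) {N τ : ℝ} (hN : 3 ≤ N) (hτ : 0 < τ) (x : ℝ) :
    heatKernel (2 * N ^ τ / min t1 t2 - 1/t1 - 1/t2) x
      ≤ Real.sqrt ((min t1 t2 / (4 * Real.pi)) / τ) := by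
  have hm : 0 < min t1 t2 := lt_min ht1 ht2
  have h1 : heatKernel (2 * N ^ τ / min t1 t2 - 1/t1 - 1/t2) x
      ≤ Real.sqrt (1 / (2 * Real.pi * (2 * τ / min t1 t2))) :=
    heatKernel_le_of_le (by positivity) (vN_lb ht1 ht2 hN hτ)
  have h2 : 1 / (2 * Real.pi * (2 * τ / min t1 t2)) = (min t1 t2 / (4 * Real.pi)) / τ := by
    rw [show 2 * Real.pi * (2 * τ / min t1 t2) = (4 * Real.pi * τ) / min t1 t2 by ring]
    rw [one_div, inv_div, div_div]
  rwa [h2] at h1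

lemma isFiniteRestrict (a b : ℝ) : IsFiniteMeasure (volume.restrict (Set.Ioc a b)) := by
  constructor
  rw [Measure.restrict_apply_univ, Real.volume_Ioc]
  exact ENNReal.ofReal_lt_top

-- Fubini: swap τ to the outside
set_option maxHeartbeats 2000000 in
lemma swap_eq (ht1 : 0 < t1) (ht2 : 0 < t2) {N : ℝ} (hN : 3 ≤ N) :
    (∫ x1 in Set.Ioc 0 (N/t1), ∫ x2 in Set.Ioc 0 (N/t2), ∫ τ in Set.Ioc (0:ℝ) 2,
      heatKernel (2 * N ^ τ / min t1 t2 - 1/t1 - 1/t2) (x2 - x1))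
    = ∫ τ in Set.Ioc (0:ℝ) 2, ∫ x1 in Set.Ioc 0 (N/t1), ∫ x2 in Set.Ioc 0 (N/t2),
      heatKernel (2 * N ^ τ / min t1 t2 - 1/t1 - 1/t2) (x2 - x1) := by
  have hN0 : (0:ℝ) < N := by linarith
  have hm : 0 < min t1 t2 := lt_min ht1 ht2
  set g : ℝ → ℝ := fun τ => Real.sqrt ((min t1 t2 / (4 * Real.pi)) / τ) with hg_def
  have hg_nonneg : ∀ τ, 0 ≤ g τ := fun τ => Real.sqrt_nonneg _
  have hgint : IntegrableOn g (Set.Ioc 0 2) := integrableOn_bound _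
  have fin1 : IsFiniteMeasure (volume.restrict (Set.Ioc (0:ℝ) (N/t1))) := isFiniteRestrict _ _
  have fin2 : IsFiniteMeasure (volume.restrict (Set.Ioc (0:ℝ) (N/t2))) := isFiniteRestrict _ _
  -- step 1: inner swap for each x1
  have inner_swap : ∀ x1 : ℝ,
      (∫ x2 in Set.Ioc 0 (N/t2), ∫ τ in Set.Ioc (0:ℝ) 2,
        heatKernel (2 * N ^ τ / min t1 t2 - 1/t1 - 1/t2) (x2 - x1))
      = ∫ τ in Set.Ioc (0:ℝ) 2, ∫ x2 in Set.Ioc 0 (N/t2),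
        heatKernel (2 * N ^ τ / min t1 t2 - 1/t1 - 1/t2) (x2 - x1) := by
    intro x1
    apply integral_integral_swap
    have hmeas : AEStronglyMeasurable
        (Function.uncurry fun x2 τ => heatKernel (2 * N ^ τ / min t1 t2 - 1/t1 - 1/t2) (x2 - x1))
        ((volume.restrict (Set.Ioc (0:ℝ) (N/t2))).prod (volume.restrict (Set.Ioc (0:ℝ) 2))) := by
      apply Measurable.aestronglyMeasurable
      exact Measurable.heatKernel_comp
        ((measurable_vN t1 t2 hN0).comp measurable_snd)
        (measurable_fst.sub measurable_const)
    apply Integrable.mono' (g := fun p : ℝ × ℝ => g p.2) ?_ hmeas ?_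
    · exact integrable_comp_snd hgint
    · rw [Measure.prod_restrict]
      rw [ae_restrict_iff' (measurableSet_Ioc.prod measurableSet_Ioc)]
      apply Eventually.of_forall
      rintro ⟨x2, τ⟩ hp
      have hτ : 0 < τ := hp.2.1
      rw [Real.norm_eq_abs, Function.uncurry]
      rw [abs_of_nonneg (heatKernel_nonneg _ _)]
      exact hk_bound ht1 ht2 hN hτ _
  rw [setIntegral_congr_fun measurableSet_Ioc (fun x1 _ => inner_swap x1)]
  -- step 2: outer swap
  apply integral_integral_swap
  have hmeas : AEStronglyMeasurable
      (Function.uncurry fun x1 τ => ∫ x2 in Set.Ioc 0 (N/t2),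
        heatKernel (2 * N ^ τ / min t1 t2 - 1/t1 - 1/t2) (x2 - x1))
      ((volume.restrict (Set.Ioc (0:ℝ) (N/t1))).prod (volume.restrict (Set.Ioc (0:ℝ) 2))) := by
    exact (sm_J_inner' t1 t2 hN0).aestronglyMeasurable
  apply Integrable.mono' (g := fun p : ℝ × ℝ => (N/t2) * g p.2) ?_ hmeas ?_
  · exact integrable_comp_snd (hgint.const_mul _)
  · rw [Measure.prod_restrict]
    rw [ae_restrict_iff' (measurableSet_Ioc.prod measurableSet_Ioc)]
    apply Eventually.of_forall
    rintro ⟨x1, τ⟩ hp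
    have hτ : 0 < τ := hp.2.1
    have hv : 0 < 2 * N ^ τ / min t1 t2 - 1/t1 - 1/t2 := vN_pos ht1 ht2 hN hτ
    rw [Real.norm_eq_abs, Function.uncurry]
    simp only
    rw [abs_of_nonneg (setIntegral_heatKernel_nonneg _ _)]
    calc (∫ x2 in Set.Ioc 0 (N/t2), heatKernel (2 * N ^ τ / min t1 t2 - 1/t1 - 1/t2) (x2 - x1))
        ≤ ∫ _ in Set.Ioc (0:ℝ) (N/t2), g τ := by
          apply setIntegral_mono_on ((integrable_heatKernel hv x1).integrableOn)
            (integrableOn_const (by rw [Real.volume_Ioc]; exact ENNReal.ofReal_ne_top))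
            measurableSet_Ioc
          intro x _
          exact hk_bound ht1 ht2 hN hτ _
      _ = (N/t2) * g τ := by
          rw [setIntegral_const, measureReal_def, Real.volume_Ioc, sub_zero, ENNReal.toReal_ofReal (by positivity), smul_eq_mul]

-- dominated convergence
lemma dct (ht1 : 0 < t1) (ht2 : 0 < t2) :
    Tendsto (fun N : ℝ => ∫ τ in Set.Ioc (0:ℝ) 2, (∫ x1 in Set.Ioc 0 (N/t1),
        ∫ x2 in Set.Ioc 0 (N/t2), heatKernel (2 * N ^ τ / min t1 t2 - 1/t1 - 1/t2) (x2 - x1)) / N)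
      atTop (nhds (2 / max t1 t2)) := by
  have key : Tendsto (fun N : ℝ => ∫ τ in Set.Ioc (0:ℝ) 2, (∫ x1 in Set.Ioc 0 (N/t1),
        ∫ x2 in Set.Ioc 0 (N/t2), heatKernel (2 * N ^ τ / min t1 t2 - 1/t1 - 1/t2) (x2 - x1)) / N)
      atTop (nhds (∫ _ in Set.Ioc (0:ℝ) 2, 1 / max t1 t2)) := by
    apply tendsto_integral_filter_of_dominated_convergence (bound := fun _ => 1/t1)
    · filter_upwards [eventually_gt_atTop (0:ℝ)] with N hN0
      exact ((sm_J t1 t2 hN0).measurable.div_const N).aestronglyMeasurable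
    · filter_upwards [eventually_ge_atTop (3:ℝ)] with N hN3
      have hN0 : (0:ℝ) < N := by linarith
      rw [ae_restrict_iff' measurableSet_Ioc]
      apply Eventually.of_forall
      intro τ hτ
      have hv : 0 < 2 * N ^ τ / min t1 t2 - 1/t1 - 1/t2 := vN_pos ht1 ht2 hN3 hτ.1
      have hJnn : 0 ≤ ∫ x1 in Set.Ioc 0 (N/t1), ∫ x2 in Set.Ioc 0 (N/t2),
          heatKernel (2 * N ^ τ / min t1 t2 - 1/t1 - 1/t2) (x2 - x1) :=
        setIntegral_nonneg measurableSet_Ioc fun x1 _ => setIntegral_heatKernel_nonneg _ _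
      have hJle : (∫ x1 in Set.Ioc 0 (N/t1), ∫ x2 in Set.Ioc 0 (N/t2),
          heatKernel (2 * N ^ τ / min t1 t2 - 1/t1 - 1/t2) (x2 - x1)) ≤ N/t1 := by
        calc (∫ x1 in Set.Ioc 0 (N/t1), ∫ x2 in Set.Ioc 0 (N/t2),
            heatKernel (2 * N ^ τ / min t1 t2 - 1/t1 - 1/t2) (x2 - x1))
            ≤ ∫ _ in Set.Ioc (0:ℝ) (N/t1), (1:ℝ) := by
              apply setIntegral_mono_on
                (integrableOn_F hv (N/t2) measurableSet_Ioc (by rw [Real.volume_Ioc]; exact ENNReal.ofReal_ne_top))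
                (integrableOn_const (by rw [Real.volume_Ioc]; exact ENNReal.ofReal_ne_top))
                measurableSet_Ioc
              intro x1 _
              exact setIntegral_heatKernel_le_one hv _ _
          _ = N/t1 := by
              rw [setIntegral_const, measureReal_def, Real.volume_Ioc, sub_zero, ENNReal.toReal_ofReal (by positivity), smul_eq_mul, mul_one]
      rw [Real.norm_eq_abs, abs_of_nonneg (div_nonneg hJnn hN0.le)]
      rw [div_le_iff₀ hN0]
      calc (∫ x1 in Set.Ioc 0 (N/t1), ∫ x2 in Set.Ioc 0 (N/t2),
          heatKernel (2 * N ^ τ / min t1 t2 - 1/t1 - 1/t2) (x2 - x1)) ≤ N/t1 := hJle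
        _ = 1/t1 * N := by ring
    · exact integrableOn_const (by rw [Real.volume_Ioc]; exact ENNReal.ofReal_ne_top)
    · have h2 : ∀ᵐ τ : ℝ, τ ≠ 2 := by
        rw [ae_iff]
        simpa [not_ne_iff, Set.setOf_eq_eq_singleton] using Real.volume_singleton (a := (2:ℝ))
      filter_upwards [ae_restrict_mem measurableSet_Ioc, ae_restrict_of_ae h2] with τ hτ hτ2
      exact J_tendsto ht1 ht2 ⟨hτ.1, lt_of_le_of_ne hτ.2 hτ2⟩
  have hconst : (∫ _ in Set.Ioc (0:ℝ) 2, 1 / max t1 t2) = 2 / max t1 t2 := by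
    rw [setIntegral_const, measureReal_def, Real.volume_Ioc, sub_zero, ENNReal.toReal_ofReal (by norm_num), smul_eq_mul]
    ring
  rwa [hconst] at key

end main

theorem stmt_3 (t1 t2 : ℝ) (ht1 : 0 < t1) (ht2 : 0 < t2) :
    Tendsto (fun N : ℝ =>
      (t1 * t2 / N) *
        ∫ x1 in (0:ℝ)..(N / t1), ∫ x2 in (0:ℝ)..(N / t2), ∫ τ in (0:ℝ)..2,
          heatKernel (2 * N ^ τ / min t1 t2 - 1 / t1 - 1 / t2) (x2 - x1))
      atTop (nhds (2 * min t1 t2)) := by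
  have hM : 0 < max t1 t2 := lt_of_lt_of_le ht1 (le_max_left _ _)
  have heq : ∀ᶠ N : ℝ in atTop,
      (t1 * t2) * ∫ τ in Set.Ioc (0:ℝ) 2, (∫ x1 in Set.Ioc 0 (N/t1), ∫ x2 in Set.Ioc 0 (N/t2),
          heatKernel (2 * N ^ τ / min t1 t2 - 1 / t1 - 1 / t2) (x2 - x1)) / N
      = (t1 * t2 / N) *
        ∫ x1 in (0:ℝ)..(N / t1), ∫ x2 in (0:ℝ)..(N / t2), ∫ τ in (0:ℝ)..2,
          heatKernel (2 * N ^ τ / min t1 t2 - 1 / t1 - 1 / t2) (x2 - x1) := by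
    filter_upwards [eventually_ge_atTop (3:ℝ)] with N hN3
    have hN0 : (0:ℝ) < N := by linarith
    have ha : (0:ℝ) ≤ N / t1 := by positivity
    have hb : (0:ℝ) ≤ N / t2 := by positivity
    have h2 : (0:ℝ) ≤ 2 := by norm_num
    rw [intervalIntegral.integral_of_le ha]
    simp_rw [intervalIntegral.integral_of_le hb, intervalIntegral.integral_of_le h2]
    rw [swap_eq ht1 ht2 hN3, integral_div]
    ring
  have h := (dct ht1 ht2).const_mul (t1 * t2)
  rw [show (t1 * t2) * (2 / max t1 t2) = 2 * min t1 t2 by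
    have hmm := min_mul_max t1 t2
    field_simp
    nlinarith [hmm]] at h
  exact h.congr' heq
end

section
/- For all σ > 0 and N > 0, one has ∫_{[0,N]²} p_σ(x1 - x2) dx1 dx2 = (N/π) · ∫_ℝ ((1 - cos z)/z²) · exp(-σ z²/(2N²)) dz. -/
open MeasureTheory Real Filter

lemma integral_cos_mul_exp_sq {b : ℝ} (hb : 0 < b) (t : ℝ) :
    ∫ x : ℝ, Real.cos (t * x) * Real.exp (-b * x ^ 2) =
      Real.sqrt (π / b) * Real.exp (-t ^ 2 / (4 * b)) := by
  have hbc : (0:ℝ) < ((b:ℂ)).re := by simpa using hb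
  have h := fourierIntegral_gaussian (b := (b:ℂ)) hbc (t := (t:ℂ))
  have hint : Integrable
      (fun x : ℝ => Complex.exp (Complex.I * t * x) * Complex.exp (-(b:ℂ) * x ^ 2)) := by
    have := integrable_cexp_quadratic hbc (Complex.I * t) 0
    refine this.congr ?_
    filter_upwards with x
    rw [← Complex.exp_add]
    ring_nf
  have hre := congrArg Complex.re h
  simp only [← RCLike.re_to_complex] at hre
  rw [← integral_re hint] at hre
  simp only [RCLike.re_to_complex] at hre
  have h1 : ∀ x : ℝ, (Complex.exp (Complex.I * t * x) * Complex.exp (-(b:ℂ) * x ^ 2)).re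
      = Real.cos (t * x) * Real.exp (-b * x ^ 2) := by
    intro x
    rw [← Complex.exp_add,
      show Complex.I * (t:ℂ) * (x:ℂ) + -(b:ℂ) * (x:ℂ) ^ 2
        = ((-b * x ^ 2 : ℝ) : ℂ) + ((t * x : ℝ) : ℂ) * Complex.I by push_cast; ring,
      Complex.exp_re]
    simp [← Complex.ofReal_pow, mul_comm]
  simp_rw [h1] at hre
  rw [hre]
  have e3 : ((π:ℂ) / b) ^ (1 / 2 : ℂ) = ((Real.sqrt (π / b) : ℝ) : ℂ) := by
    rw [Real.sqrt_eq_rpow, Complex.ofReal_cpow (by positivity)]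
    push_cast
    norm_num
  have e4 : Complex.exp (-(t:ℂ) ^ 2 / (4 * b)) = ((Real.exp (-t ^ 2 / (4 * b)) : ℝ) : ℂ) := by
    rw [Complex.ofReal_exp]; push_cast; ring_nf
  rw [e3, e4, ← Complex.ofReal_mul, Complex.ofReal_re]

lemma heatKernel_eq {σ : ℝ} (hσ : 0 < σ) (x : ℝ) :
    heatKernel σ x = (2 * π)⁻¹ * ∫ z : ℝ, Real.cos (x * z) * Real.exp (-(σ / 2) * z ^ 2) := by
  rw [integral_cos_mul_exp_sq (by positivity) x, heatKernel]
  rw [show -x ^ 2 / (4 * (σ / 2)) = -x ^ 2 / (2 * σ) by ring]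
  have key : (2 * π)⁻¹ * Real.sqrt (π / (σ / 2)) = (Real.sqrt (2 * π * σ))⁻¹ := by
    rw [show (2 * π)⁻¹ = Real.sqrt (((2 * π)⁻¹) ^ 2) from (Real.sqrt_sq (by positivity)).symm,
      ← Real.sqrt_mul (by positivity), ← Real.sqrt_inv]
    congr 1
    field_simp
  rw [← mul_assoc, key, div_eq_mul_inv, mul_comm]

lemma inner_cos (z : ℝ) (hz : z ≠ 0) (x1 a b : ℝ) :
    ∫ x2 in a..b, Real.cos ((x1 - x2) * z)
      = (Real.sin ((x1 - b) * z) - Real.sin ((x1 - a) * z)) * (-z)⁻¹ := by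
  have hderiv : ∀ x ∈ Set.uIcc a b,
      HasDerivAt (fun x2 => Real.sin ((x1 - x2) * z) * (-z)⁻¹) (Real.cos ((x1 - x) * z)) x := by
    intro x _
    have h1 : HasDerivAt (fun x2 : ℝ => (x1 - x2) * z) (-1 * z) x :=
      ((hasDerivAt_id x).const_sub x1).mul_const z
    have h2 := (h1.sin).mul_const (-z)⁻¹
    refine h2.congr_deriv ?_
    rw [neg_one_mul, mul_assoc, mul_inv_cancel₀ (neg_ne_zero.mpr hz), mul_one]
  have hcont : IntervalIntegrable (fun x2 => Real.cos ((x1 - x2) * z)) volume a b :=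
    (Continuous.intervalIntegrable (by fun_prop) a b)
  rw [intervalIntegral.integral_eq_sub_of_hasDerivAt hderiv hcont]
  ring

lemma K_eq {N : ℝ} (hN : 0 ≤ N) (z : ℝ) (hz : z ≠ 0) :
    ∫ x1 in Set.Ioc 0 N, ∫ x2 in Set.Ioc 0 N, Real.cos ((x1 - x2) * z)
      = 2 * (1 - Real.cos (N * z)) / z ^ 2 := by
  rw [← intervalIntegral.integral_of_le hN]
  have h1 : ∀ x1 : ℝ, ∫ x2 in Set.Ioc 0 N, Real.cos ((x1 - x2) * z)
      = (Real.sin ((x1 - N) * z) - Real.sin ((x1 - 0) * z)) * (-z)⁻¹ := fun x1 => by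
    rw [← intervalIntegral.integral_of_le hN, inner_cos z hz]
  simp only [h1]
  have hderiv : ∀ x ∈ Set.uIcc (0:ℝ) N,
      HasDerivAt
        (fun x1 => (-(Real.cos ((x1 - N) * z)) * z⁻¹ + Real.cos ((x1 - 0) * z) * z⁻¹) * (-z)⁻¹)
        ((Real.sin ((x - N) * z) - Real.sin ((x - 0) * z)) * (-z)⁻¹) x := by
    intro x _
    have hA : HasDerivAt (fun x1 : ℝ => (x1 - N) * z) (1 * z) x :=
      ((hasDerivAt_id x).sub_const N).mul_const z
    have hB : HasDerivAt (fun x1 : ℝ => (x1 - 0) * z) (1 * z) x :=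
      ((hasDerivAt_id x).sub_const 0).mul_const z
    have h := (((hA.cos).neg.mul_const z⁻¹).add ((hB.cos).mul_const z⁻¹)).mul_const (-z)⁻¹
    refine h.congr_deriv ?_
    have hz' : z * z⁻¹ = 1 := mul_inv_cancel₀ hz
    linear_combination ((Real.sin ((x - N) * z) - Real.sin ((x - 0) * z)) * (-z)⁻¹) * hz'
  have hcont : IntervalIntegrable
      (fun x1 => (Real.sin ((x1 - N) * z) - Real.sin ((x1 - 0) * z)) * (-z)⁻¹) volume 0 N :=
    (Continuous.intervalIntegrable (by fun_prop) 0 N)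
  rw [intervalIntegral.integral_eq_sub_of_hasDerivAt hderiv hcont]
  simp only [sub_zero, zero_sub, Real.cos_zero, neg_mul, Real.cos_neg]
  field_simp
  ring_nf
  rw [Real.cos_zero]
  ring

lemma my_swap {N : ℝ} (f : ℝ → ℝ → ℝ)
    (hmeas : AEStronglyMeasurable (Function.uncurry f)
      ((volume.restrict (Set.Ioc 0 N)).prod volume))
    {g : ℝ → ℝ} (hg : Integrable g) (hb : ∀ x z, ‖f x z‖ ≤ g z) :
    ∫ x in Set.Ioc (0:ℝ) N, (∫ z, f x z) = ∫ z, ∫ x in Set.Ioc (0:ℝ) N, f x z := by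
  have hfin : IsFiniteMeasure (volume.restrict (Set.Ioc (0:ℝ) N)) := by
    constructor
    rw [Measure.restrict_apply_univ, Real.volume_Ioc]
    exact ENNReal.ofReal_lt_top
  refine integral_integral_swap ?_
  have hgint : Integrable (fun p : ℝ × ℝ => g p.2)
      ((volume.restrict (Set.Ioc 0 N)).prod volume) := by
    rw [integrable_prod_iff (hg.aestronglyMeasurable.comp_snd)]
    exact ⟨Eventually.of_forall (fun x => hg),
      by simpa using (integrable_const (∫ z, ‖g z‖))⟩
  exact hgint.mono' hmeas (Eventually.of_forall (fun p => hb p.1 p.2))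

theorem stmt_19 (σ N : ℝ) (hσ : 0 < σ) (hN : 0 < N) :
    ∫ x1 in (0:ℝ)..N, ∫ x2 in (0:ℝ)..N, heatKernel σ (x1 - x2) =
      (N / Real.pi) *
        ∫ z : ℝ, ((1 - Real.cos z) / z ^ 2) * Real.exp (-σ * z ^ 2 / (2 * N ^ 2)) := by
  have hc : (0:ℝ) < σ / 2 := by positivity
  have hg : Integrable (fun z : ℝ => Real.exp (-(σ / 2) * z ^ 2)) :=
    integrable_exp_neg_mul_sq hc
  have hbound : ∀ u z : ℝ, ‖Real.cos u * Real.exp (-(σ / 2) * z ^ 2)‖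
      ≤ Real.exp (-(σ / 2) * z ^ 2) := by
    intro u z
    rw [norm_mul, Real.norm_eq_abs, Real.norm_eq_abs, Real.abs_exp]
    exact mul_le_of_le_one_left (Real.exp_pos _).le (Real.abs_cos_le_one u)
  simp only [heatKernel_eq hσ, intervalIntegral.integral_of_le hN.le,
    MeasureTheory.integral_const_mul]
  -- swap x2 and z
  have step1 : ∀ x1 : ℝ,
      ∫ x2 in Set.Ioc (0:ℝ) N, ∫ z : ℝ, Real.cos ((x1 - x2) * z) * Real.exp (-(σ / 2) * z ^ 2)
      = ∫ z : ℝ, ∫ x2 in Set.Ioc (0:ℝ) N,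
          Real.cos ((x1 - x2) * z) * Real.exp (-(σ / 2) * z ^ 2) := by
    intro x1
    refine my_swap _ ?_ hg (fun x z => hbound _ z)
    exact Continuous.aestronglyMeasurable (by fun_prop)
  simp only [step1]
  -- swap x1 and z
  have step2 :
      ∫ x1 in Set.Ioc (0:ℝ) N, ∫ z : ℝ, ∫ x2 in Set.Ioc (0:ℝ) N,
          Real.cos ((x1 - x2) * z) * Real.exp (-(σ / 2) * z ^ 2)
      = ∫ z : ℝ, ∫ x1 in Set.Ioc (0:ℝ) N, ∫ x2 in Set.Ioc (0:ℝ) N,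
          Real.cos ((x1 - x2) * z) * Real.exp (-(σ / 2) * z ^ 2) := by
    refine my_swap _ ?_ (hg.mul_const N) ?_
    · have : StronglyMeasurable fun p : ℝ × ℝ =>
          ∫ x2 in Set.Ioc (0:ℝ) N, Real.cos ((p.1 - x2) * p.2) * Real.exp (-(σ / 2) * p.2 ^ 2) :=
        StronglyMeasurable.integral_prod_right'
          (f := fun q : (ℝ × ℝ) × ℝ =>
            Real.cos ((q.1.1 - q.2) * q.1.2) * Real.exp (-(σ / 2) * q.1.2 ^ 2))
          (Continuous.stronglyMeasurable (by fun_prop))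
      exact this.aestronglyMeasurable
    · intro x z
      have hfin : IsFiniteMeasure (volume.restrict (Set.Ioc (0:ℝ) N)) := by
        constructor
        rw [Measure.restrict_apply_univ, Real.volume_Ioc]
        exact ENNReal.ofReal_lt_top
      have := norm_integral_le_of_norm_le_const
        (μ := volume.restrict (Set.Ioc (0:ℝ) N))
        (f := fun x2 => Real.cos ((x - x2) * z) * Real.exp (-(σ / 2) * z ^ 2))
        (C := Real.exp (-(σ / 2) * z ^ 2)) (Eventually.of_forall (fun x2 => hbound _ z))
      refine this.trans (le_of_eq ?_)
      rw [Measure.real, Measure.restrict_apply_univ, Real.volume_Ioc]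
      rw [ENNReal.toReal_ofReal (by linarith)]
      ring
  rw [step2]
  simp only [MeasureTheory.integral_mul_const]
  -- replace the double cosine integral a.e.
  have h0 : ∀ᵐ z : ℝ, z ≠ 0 := by
    exact compl_mem_ae_iff.mpr (measure_singleton (0:ℝ))
  have hae : (fun z : ℝ => (∫ x1 in Set.Ioc (0:ℝ) N, ∫ x2 in Set.Ioc (0:ℝ) N,
        Real.cos ((x1 - x2) * z)) * Real.exp (-(σ / 2) * z ^ 2))
      =ᵐ[volume] fun z : ℝ =>
        2 * (1 - Real.cos (N * z)) / z ^ 2 * Real.exp (-(σ / 2) * z ^ 2) := by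
    filter_upwards [h0] with z hz
    rw [K_eq hN.le z hz]
  rw [integral_congr_ae hae]
  -- change of variables z ↦ N⁻¹ * z
  have hcov := MeasureTheory.Measure.integral_comp_mul_left
    (fun z : ℝ => 2 * (1 - Real.cos (N * z)) / z ^ 2 * Real.exp (-(σ / 2) * z ^ 2)) N⁻¹
  have hptw : ∀ w : ℝ,
      2 * (1 - Real.cos (N * (N⁻¹ * w))) / (N⁻¹ * w) ^ 2 * Real.exp (-(σ / 2) * (N⁻¹ * w) ^ 2)
      = (2 * N ^ 2) * (((1 - Real.cos w) / w ^ 2) * Real.exp (-σ * w ^ 2 / (2 * N ^ 2))) := by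
    intro w
    have hNw : N * (N⁻¹ * w) = w := by field_simp
    have hexp : Real.exp (-(σ / 2) * (N⁻¹ * w) ^ 2) = Real.exp (-σ * w ^ 2 / (2 * N ^ 2)) := by
      congr 1
      field_simp
    rw [hNw, hexp]
    by_cases hw : w = 0
    · simp [hw]
    · rw [mul_pow]
      field_simp
  simp only [hptw] at hcov
  rw [MeasureTheory.integral_const_mul] at hcov
  have hNa : |(N⁻¹)⁻¹| = N := by rw [inv_inv, abs_of_pos hN]
  rw [hNa, smul_eq_mul] at hcov
  -- hcov : 2 * N^2 * ∫ H = N * ∫ F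
  have hF : ∫ z : ℝ, 2 * (1 - Real.cos (N * z)) / z ^ 2 * Real.exp (-(σ / 2) * z ^ 2)
      = N⁻¹ * (2 * N ^ 2) *
        ∫ w : ℝ, ((1 - Real.cos w) / w ^ 2) * Real.exp (-σ * w ^ 2 / (2 * N ^ 2)) := by
    rw [mul_assoc, hcov, ← mul_assoc, inv_mul_cancel₀ hN.ne', one_mul]
  rw [hF]
  have hπ : π ≠ 0 := Real.pi_ne_zero
  field_simp
  ring_nf
  congr 1
  funext w
  ring
end
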